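/- Let f : ℝ × ℝ → ℝ be differentiable at the point (x, y). Then the Sobel-filter difference quotient converges to the first partial derivative: as h → 0 with h ≠ 0, the quantity [f(x+h, y−h) + 2·f(x+h, y) + f(x+h, y+h) − f(x−h, y−h) − 2·f(x−h, y) − f(x−h, y+h)] / (8h) tends to ∂f/∂x (x, y). -/

import Mathlib

/-!
The Sobel quotient is the `(1, 2, 1)`-weighted average of the symmetric difference quotients
of `f` along the directions `(1, c)`, `c = -1, 0, 1`, which tend to `L (1, c)` for
`L = fderiv ℝ f (x, y)`; by linearity `L (1, -1) + L (1, 1) = 2 L (1, 0)`.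
-/

open Filter Topology

section SymmetricDifference

variable {𝕜 E F : Type*} [NontriviallyNormedField 𝕜] [NormedAddCommGroup E] [NormedSpace 𝕜 E]
  [NormedAddCommGroup F] [NormedSpace 𝕜 F]

theorem HasFDerivAt.tendsto_slope_zero_add_smul {f : E → F} {f' : E →L[𝕜] F} {a : E}
    (hf : HasFDerivAt f f' a) (v : E) :
    Tendsto (fun t : 𝕜 ↦ t⁻¹ • (f (a + t • v) - f a)) (𝓝[≠] 0) (𝓝 (f' v)) := by
  have hline : HasDerivAt (fun t : 𝕜 ↦ a + t • v) v 0 := by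
    simpa using ((hasDerivAt_id (0 : 𝕜)).smul_const v).const_add a
  have hf0 : HasFDerivAt f f' (a + (0 : 𝕜) • v) := by simpa using hf
  simpa using (hf0.comp_hasDerivAt 0 hline).tendsto_slope_zero

theorem HasFDerivAt.tendsto_symmetric_difference {f : E → F} {f' : E →L[𝕜] F} {a : E}
    (hf : HasFDerivAt f f' a) (v : E) :
    Tendsto (fun t : 𝕜 ↦ t⁻¹ • (f (a + t • v) - f (a - t • v))) (𝓝[≠] 0) (𝓝 (2 • f' v)) := by
  have hfwd := hf.tendsto_slope_zero_add_smul v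
  have hbwd := hf.tendsto_slope_zero_add_smul (-v)
  rw [map_neg] at hbwd
  convert hfwd.sub hbwd using 2 with t
  · simp only [smul_neg, ← sub_eq_add_neg, ← smul_sub, sub_sub_sub_cancel_right]
  · rw [sub_neg_eq_add, two_smul]

end SymmetricDifference

/-- The Sobel-filter difference quotient converges to the first partial
derivative: for `f : ℝ × ℝ → ℝ` differentiable at `(x, y)`, as `h → 0` with
`h ≠ 0`, the normalized weighted central difference with weights
`(1, 2, 1)` tends to `∂f/∂x (x, y) = fderiv ℝ f (x, y) (1, 0)`. -/
theorem sobel_tendsto_partial_deriv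
    (f : ℝ × ℝ → ℝ) (x y : ℝ)
    (hf : DifferentiableAt ℝ f (x, y)) :
    Tendsto
      (fun h : ℝ =>
        (f (x + h, y - h) + 2 * f (x + h, y) + f (x + h, y + h)
          - f (x - h, y - h) - 2 * f (x - h, y) - f (x - h, y + h)) / (8 * h))
      (nhdsWithin 0 {0}ᶜ)
      (nhds (fderiv ℝ f (x, y) (1, 0))) := by
  set L := fderiv ℝ f (x, y)
  have hdiff (c : ℝ) : Tendsto (fun h : ℝ ↦ h⁻¹ * (f (x + h, y + c * h) - f (x - h, y - c * h)))
      (𝓝[≠] 0) (𝓝 (2 * L (1, c))) := by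
    simpa [mul_comm _ c] using hf.hasFDerivAt.tendsto_symmetric_difference ((1 : ℝ), c)
  have hdiag : L (1, -1) + L (1, 1) = 2 * L (1, 0) := by
    rw [← map_add, ← smul_eq_mul, ← map_smul]
    norm_num
  have hlimit : 8⁻¹ * (2 * L (1, -1) + 2 * (2 * L (1, 0)) + 2 * L (1, 1)) = L (1, 0) := by
    linear_combination 4⁻¹ * hdiag
  have hsobel := (((hdiff (-1)).add ((hdiff 0).const_mul 2)).add (hdiff 1)).const_mul 8⁻¹
  rw [hlimit] at hsobel
  refine hsobel.congr fun h ↦ ?_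
  simp only [neg_one_mul, one_mul, zero_mul, add_zero, sub_zero, sub_neg_eq_add,
    ← sub_eq_add_neg]
  ring
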